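/- Let A = (a_{i,j}) be an n×n matrix over a field, let f be a fixed scalar, and let T be the f-circulant matrix with first column (t_1, ..., t_n) treated as indeterminates (with the convention t_k = f·t_{n+k} for k ≤ 0, i.e., wrap-around entries scaled by f). Set B = AT. Then for every l with 1 ≤ l ≤ n, the determinant of the l×l leading principal submatrix B_{l,l} is a homogeneous polynomial of degree l in t_1, ..., t_n, whose coefficient of the monomial t_1^l equals det(α_1, α_2, ..., α_l), where α_j is the j-th column of the l×n block of the first l rows of A; that is, it equals det(A_{l,l}), the determinant of the l×l leading principal submatrix of A. -/

import Mathlib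

open Matrix

/-- The `l×l` leading principal submatrix of an `n×n` matrix. -/
def lead {R : Type*} {n : ℕ} (A : Matrix (Fin n) (Fin n) R) (l : ℕ) (hl : l ≤ n) :
    Matrix (Fin l) (Fin l) R :=
  A.submatrix (Fin.castLE hl) (Fin.castLE hl)

/-- The `f`-circulant matrix `T = (t_{i-j+1})` with first column `t` and wrap-around
convention `t_k = f·t_{n+k}` for `k ≤ 0`. -/
def fCirc {R : Type*} [CommRing R] (n : ℕ) (f : R) (t : Fin n → R) :
    Matrix (Fin n) (Fin n) R :=
  fun i j =>
    if h : (j : ℕ) ≤ (i : ℕ) then t ⟨(i : ℕ) - (j : ℕ), by have := i.isLt; omega⟩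
    else f * t ⟨n + (i : ℕ) - (j : ℕ), by have := i.isLt; have := j.isLt; omega⟩

/-- Coefficient of `X i0 ^ l` equals the `l`-th coefficient of the single-variable
polynomial obtained by sending `X i0 ↦ X` and all other variables to `0`. -/
lemma coeff_single_eq_coeff_aeval {F : Type*} [CommSemiring F] {n : ℕ}
    (i0 : Fin n) (l : ℕ) (P : MvPolynomial (Fin n) F) :
    MvPolynomial.coeff (Finsupp.single i0 l) P =
      (MvPolynomial.aeval
        (fun j : Fin n => if j = i0 then (Polynomial.X : Polynomial F) else 0) P).coeff l := by
  induction P using MvPolynomial.induction_on' with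
  | add p q hp hq => simp only [map_add, MvPolynomial.coeff_add, Polynomial.coeff_add, hp, hq]
  | monomial m a =>
    rw [MvPolynomial.aeval_monomial, MvPolynomial.coeff_monomial]
    by_cases hsupp : ∀ j ∈ m.support, j = i0
    · have hm : m = Finsupp.single i0 (m i0) :=
        Finsupp.support_subset_singleton.mp (fun j hj => Finset.mem_singleton.mpr (hsupp j hj))
      rw [hm, Finsupp.prod_single_index (by simp)]
      simp only [if_true, Polynomial.algebraMap_eq, Polynomial.coeff_C_mul,
        Polynomial.coeff_X_pow, mul_ite, mul_one, mul_zero]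
      by_cases h : m i0 = l
      · rw [h, if_pos rfl, if_pos rfl]
      · rw [if_neg (fun hh => h (Finsupp.single_injective i0 hh)), if_neg (fun hh => h hh.symm)]
    · push_neg at hsupp
      obtain ⟨j, hj, hji⟩ := hsupp
      rw [Finsupp.prod, Finset.prod_eq_zero hj (by rw [if_neg hji]; exact zero_pow (by
        simpa [Finsupp.mem_support_iff] using hj))]
      rw [mul_zero, Polynomial.coeff_zero, if_neg]
      intro h
      rw [h, Finsupp.mem_support_iff, Finsupp.single_apply,
        if_neg (fun hh => hji hh.symm)] at hj
      exact hj rfl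

/-- Let `A` be an `n×n` matrix over a field, `f` a scalar, and `T` the `f`-circulant
matrix whose first column consists of the indeterminates `t_1, …, t_n` (with wrap-around
entries scaled by `f`), and set `B = A·T`.  Then for `1 ≤ l ≤ n`, `det(B_{l,l})` is a
homogeneous polynomial of degree `l` in `t_1, …, t_n` whose coefficient of the monomial
`t_1^l` equals `det(A_{l,l})`. -/
theorem det_leading_block_of_fCirculant_product {F : Type*} [Field F] {n : ℕ}
    (A : Matrix (Fin n) (Fin n) F) (f : F) (l : ℕ) (hl : l ≤ n) (h1 : 1 ≤ l) :
    ((lead (A.map MvPolynomial.C *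
        fCirc n (MvPolynomial.C f) (fun i => MvPolynomial.X i)) l hl).det).IsHomogeneous l ∧
    MvPolynomial.coeff (Finsupp.single (⟨0, by omega⟩ : Fin n) l)
        (lead (A.map MvPolynomial.C *
          fCirc n (MvPolynomial.C f) (fun i => MvPolynomial.X i)) l hl).det =
      (lead A l hl).det := by
  classical
  have hent : ∀ i j : Fin l,
      ((lead (A.map MvPolynomial.C *
        fCirc n (MvPolynomial.C f) (fun i => MvPolynomial.X i)) l hl) i j).IsHomogeneous 1 := by
    intro i j
    simp only [lead, Matrix.submatrix_apply, Matrix.mul_apply, Matrix.map_apply]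
    apply MvPolynomial.IsHomogeneous.sum
    intro k _
    unfold fCirc
    split
    · exact MvPolynomial.isHomogeneous_C_mul_X _ _
    · rw [← mul_assoc, ← MvPolynomial.C_mul]
      exact MvPolynomial.isHomogeneous_C_mul_X _ _
  constructor
  · rw [Matrix.det_apply]
    apply MvPolynomial.IsHomogeneous.sum
    intro σ _
    have hprod : (∏ i, (lead (A.map MvPolynomial.C *
        fCirc n (MvPolynomial.C f) (fun i => MvPolynomial.X i)) l hl) (σ i) i).IsHomogeneous l := by
      have := MvPolynomial.IsHomogeneous.prod Finset.univ
        (fun i => (lead (A.map MvPolynomial.C *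
          fCirc n (MvPolynomial.C f) (fun i => MvPolynomial.X i)) l hl) (σ i) i)
        (fun _ => 1) (fun i _ => hent _ _)
      simpa using this
    rcases Int.units_eq_one_or (Equiv.Perm.sign σ) with h | h <;> rw [h]
    · simpa using hprod
    · simpa [Units.smul_def] using hprod.neg
  · rw [coeff_single_eq_coeff_aeval]
    rw [AlgHom.map_det, AlgHom.mapMatrix_apply]
    have h2 : (lead (A.map MvPolynomial.C *
          fCirc n (MvPolynomial.C f) (fun i => MvPolynomial.X i)) l hl).map
        (MvPolynomial.aeval fun j : Fin n =>
          if j = (⟨0, by omega⟩ : Fin n) then (Polynomial.X : Polynomial F) else 0) =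
        (Polynomial.X : Polynomial F) • ((lead A l hl).map Polynomial.C) := by
      ext i j
      simp only [lead, Matrix.map_apply, Matrix.submatrix_apply, Matrix.smul_apply,
        smul_eq_mul, Matrix.mul_apply, map_sum]
      rw [Finset.sum_eq_single (Fin.castLE hl j)]
      · unfold fCirc
        rw [dif_pos (le_refl _), _root_.map_mul, MvPolynomial.aeval_C, MvPolynomial.aeval_X,
          if_pos (by ext; simp)]
        rw [Polynomial.algebraMap_eq, mul_comm]
      · intro k _ hk
        unfold fCirc
        split
        · rename_i h
          rw [_root_.map_mul, MvPolynomial.aeval_X, if_neg, mul_zero]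
          intro heq
          apply hk
          have h0 : (k : ℕ) - (Fin.castLE hl j : ℕ) = 0 := by
            simpa [Fin.ext_iff] using heq
          have hj' : (Fin.castLE hl j : ℕ) ≤ (k : ℕ) := h
          exact Fin.ext (by omega)
        · rename_i h
          rw [_root_.map_mul, _root_.map_mul, MvPolynomial.aeval_X, if_neg, mul_zero, mul_zero]
          intro heq
          have h0 : n + (k : ℕ) - (Fin.castLE hl j : ℕ) = 0 := by
            simpa [Fin.ext_iff] using heq
          have := (Fin.castLE hl j).isLt
          omega
      · intro h
        exact absurd (Finset.mem_univ _) h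
    rw [h2, Matrix.det_smul,
      show ((lead A l hl).map ⇑Polynomial.C).det = Polynomial.C (lead A l hl).det from by
        rw [← RingHom.mapMatrix_apply, ← RingHom.map_det]]
    rw [mul_comm, Polynomial.coeff_C_mul, Polynomial.coeff_X_pow, Fintype.card_fin, if_pos rfl, mul_one]
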